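/- Let Θ ⊆ ℝ^d be a convex set and g : ℝ^d → ℝ a convex function. Let θ^(0), θ^(1), …, θ^(m−1) ∈ Θ and define θ̃^(m) = (1/m)·Σ_{i=0}^{m−1} θ^(i). Let η₂ > 0, λ^(0) ≥ 0, and generate the dual sequence by λ^(i+1) = max{λ^(i) + η₂·g(θ^(i)), 0} for i = 0, …, m−1 (the dual update of Eq. (9) with γ = 0 and δ = 0). Then max{g(θ̃^(m)), 0} ≤ λ^(m)/(m·η₂). -/

import Mathlib

/-! Each dual step gives `η₂ g(θ⁽ⁱ⁾) ≤ λ⁽ⁱ⁺¹⁾ - λ⁽ⁱ⁾`; summing telescopes to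
`η₂ ∑ g(θ⁽ⁱ⁾) ≤ λ⁽ᵐ⁾ - λ⁽⁰⁾ ≤ λ⁽ᵐ⁾`, and Jensen bounds `g(θ̃⁽ᵐ⁾)` by the average of the `g(θ⁽ⁱ⁾)`. -/

open Finset

theorem ConvexOn.map_inv_card_smul_sum_le {𝕜 E β ι : Type*} [Field 𝕜] [LinearOrder 𝕜]
    [IsStrictOrderedRing 𝕜] [AddCommGroup E] [AddCommGroup β] [PartialOrder β]
    [IsOrderedAddMonoid β] [Module 𝕜 E] [Module 𝕜 β] [IsStrictOrderedModule 𝕜 β]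
    {s : Set E} {f : E → β} (hf : ConvexOn 𝕜 s f) {t : Finset ι} (ht : t.Nonempty)
    {p : ι → E} (hp : ∀ i ∈ t, p i ∈ s) :
    f ((#t : 𝕜)⁻¹ • ∑ i ∈ t, p i) ≤ (#t : 𝕜)⁻¹ • ∑ i ∈ t, f (p i) := by
  simpa [centerMass] using
    hf.map_centerMass_le (w := fun _ => (1 : 𝕜)) (fun _ _ => zero_le_one) (by simpa) hp

theorem Finset.sum_range_le_sub_of_add_le {α : Type*} [AddCommGroup α] [PartialOrder α]
    [IsOrderedAddMonoid α] {a u : ℕ → α} {m : ℕ} (h : ∀ i < m, u i + a i ≤ u (i + 1)) :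
    ∑ i ∈ range m, a i ≤ u m - u 0 := by
  rw [← sum_range_sub]
  exact sum_le_sum fun i hi => le_sub_iff_add_le'.2 (h i (mem_range.1 hi))

theorem stmt3_general {d : ℕ}
    (g : EuclideanSpace ℝ (Fin d) → ℝ) (hg : ConvexOn ℝ Set.univ g)
    (m : ℕ) (hm : 1 ≤ m)
    (θ : ℕ → EuclideanSpace ℝ (Fin d))
    (η₂ : ℝ) (hη : 0 < η₂)
    (lam : ℕ → ℝ) (hlam0 : 0 ≤ lam 0)
    (hdual : ∀ i < m, lam (i + 1) = max (lam i + η₂ * g (θ i)) 0) :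
    max (g ((m : ℝ)⁻¹ • ∑ i ∈ Finset.range m, θ i)) 0 ≤ lam m / (m * η₂) := by
  have hm₀ : (0 : ℝ) < m := by exact_mod_cast hm
  have hlam_m : 0 ≤ lam m := by
    obtain ⟨k, rfl⟩ := Nat.exists_eq_add_of_le' hm
    exact hdual k k.lt_succ_self ▸ le_max_right _ _
  have hsum : η₂ * ∑ i ∈ range m, g (θ i) ≤ lam m := by
    have := sum_range_le_sub_of_add_le (a := fun i => η₂ * g (θ i))
      fun i hi => hdual i hi ▸ le_max_left _ _
    rw [mul_sum]
    linarith
  refine max_le ?_ (by positivity)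
  calc g ((m : ℝ)⁻¹ • ∑ i ∈ range m, θ i)
      ≤ (m : ℝ)⁻¹ * ∑ i ∈ range m, g (θ i) := by
        simpa using hg.map_inv_card_smul_sum_le (t := range m) (nonempty_range_iff.2 (by omega))
          (p := θ) fun _ _ => Set.mem_univ _
    _ ≤ (m : ℝ)⁻¹ * (lam m / η₂) := by
        gcongr
        rwa [le_div_iff₀ hη, mul_comm]
    _ = lam m / (m * η₂) := by field_simp

/-- Statement 1 of Proposition 2 (simplified dual update with γ = 0, δ = 0):
the constraint violation of the running average satisfies
[g(θ̃^(m))]_+ ≤ λ^(m)/(m·η₂). -/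
theorem stmt3 {d : ℕ} (Θ : Set (EuclideanSpace ℝ (Fin d))) (hΘ : Convex ℝ Θ)
    (g : EuclideanSpace ℝ (Fin d) → ℝ) (hg : ConvexOn ℝ Set.univ g)
    (m : ℕ) (hm : 1 ≤ m)
    (θ : ℕ → EuclideanSpace ℝ (Fin d)) (hθ : ∀ i < m, θ i ∈ Θ)
    (η₂ : ℝ) (hη : 0 < η₂)
    (lam : ℕ → ℝ) (hlam0 : 0 ≤ lam 0)
    (hdual : ∀ i < m, lam (i + 1) = max (lam i + η₂ * g (θ i)) 0) :
    max (g ((m : ℝ)⁻¹ • ∑ i ∈ Finset.range m, θ i)) 0 ≤ lam m / (m * η₂) :=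
  stmt3_general g hg m hm θ η₂ hη lam hlam0 hdual
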